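/- Let θ ∈ ℝ^p, σ > 0, and θ' = θ + σξ with ξ ∼ 𝒩(0, I_p). Let 𝒟 be a distribution over (X, Y) ∈ (ℝ^p \ {0}) × {−1, 1}. Then the variance over ξ of the accuracy A(ξ) := P_{(X,Y)∼𝒟}[sign((θ+σξ)ᵀX) = Y] satisfies Var_ξ[A(ξ)] ≤ E_{Z₁,Z₂ ∼ 𝒟⊗𝒟}[ Φ(min(α₁, α₂)/σ) · Φ(−max(α₁, α₂)/σ) ], where αᵢ = α(θ, Xᵢ, Yᵢ) = Yᵢ·θᵀXᵢ/‖Xᵢ‖₂ and Φ is the standard normal CDF. -/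

import Mathlib

open MeasureTheory ProbabilityTheory
open Real NNReal ENNReal

/-- Standard normal CDF. -/
noncomputable def stdNormalCDF (t : ℝ) : ℝ :=
  ((ProbabilityTheory.gaussianReal 0 1) (Set.Iic t)).toReal

/-- Sign-based prediction. -/
noncomputable def sgn (t : ℝ) : ℝ := if 0 ≤ t then 1 else -1

/-- Angular margin `α(θ, x, y) = y·θᵀx/‖x‖`. -/
noncomputable def angularMargin {p : ℕ} (θ x : EuclideanSpace ℝ (Fin p)) (y : ℝ) : ℝ :=
  y * (inner ℝ θ x : ℝ) / ‖x‖



lemma sqrt_const_eq (a b : ℝ) (ha : 0 < a) (hb : 0 < b) :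
    (√(2*π*a))⁻¹ * (√(2*π*b))⁻¹ * √(π / ((a+b)/(2*a*b))) = (√(2*π*(a+b)))⁻¹ := by
  have hπ := Real.pi_pos
  have hab : 0 < a + b := by linarith
  rw [← Real.sqrt_inv, ← Real.sqrt_inv, ← Real.sqrt_inv, ← Real.sqrt_mul (by positivity),
    ← Real.sqrt_mul (by positivity)]
  congr 1
  field_simp

lemma pdf_conv (a b : ℝ) (ha : 0 < a) (hb : 0 < b) (z : ℝ) :
    ∫ x, ((√(2*π*a))⁻¹ * rexp (-x^2/(2*a))) * ((√(2*π*b))⁻¹ * rexp (-(z-x)^2/(2*b)))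
      = (√(2*π*(a+b)))⁻¹ * rexp (-z^2/(2*(a+b))) := by
  have hab : 0 < a + b := by linarith
  set k : ℝ := (a+b)/(2*a*b) with hk
  have hkpos : 0 < k := by positivity
  set c : ℝ := a*z/(a+b) with hc
  have hpt : ∀ x, ((√(2*π*a))⁻¹ * rexp (-x^2/(2*a))) * ((√(2*π*b))⁻¹ * rexp (-(z-x)^2/(2*b)))
      = ((√(2*π*a))⁻¹ * (√(2*π*b))⁻¹ * rexp (-z^2/(2*(a+b)))) * rexp (-k * (x - c)^2) := by
    intro x
    rw [mul_mul_mul_comm, ← Real.exp_add]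
    conv_rhs => rw [mul_assoc, ← Real.exp_add]
    congr 2
    rw [hk, hc]
    field_simp
    ring
  simp only [hpt]
  rw [MeasureTheory.integral_const_mul,
    MeasureTheory.integral_sub_right_eq_self (fun x => rexp (-k * x^2)) c,
    integral_gaussian k, mul_right_comm, sqrt_const_eq a b ha hb]

lemma gaussianPDFReal_le (v : ℝ≥0) (hv : v ≠ 0) (x : ℝ) :
    gaussianPDFReal 0 v x ≤ (√(2*π*v))⁻¹ := by
  have h1 : rexp (-(x - 0)^2/(2*(v:ℝ))) ≤ 1 := by
    rw [Real.exp_le_one_iff]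
    have : (0:ℝ) < v := by positivity
    have h2 : 0 ≤ (x - 0)^2 := sq_nonneg _
    have h3 : 0 ≤ (x - 0)^2 / (2*(v:ℝ)) := by positivity
    have h4 : -(x - 0)^2/(2*(v:ℝ)) = -((x-0)^2/(2*(v:ℝ))) := by ring
    rw [h4]
    linarith
  calc gaussianPDFReal 0 v x = (√(2*π*v))⁻¹ * rexp (-(x - 0)^2/(2*(v:ℝ))) := rfl
  _ ≤ (√(2*π*v))⁻¹ * 1 := by
      apply mul_le_mul_of_nonneg_left h1
      positivity
  _ = (√(2*π*v))⁻¹ := mul_one _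

lemma integrable_mul_gaussianPDFReal (v₁ v₂ : ℝ≥0) (h₂ : v₂ ≠ 0) (z : ℝ) :
    Integrable (fun x => gaussianPDFReal 0 v₁ x * gaussianPDFReal 0 v₂ (z - x)) := by
  have : (fun x => gaussianPDFReal 0 v₁ x * gaussianPDFReal 0 v₂ (z - x))
      = fun x => gaussianPDFReal 0 v₂ (z - x) * gaussianPDFReal 0 v₁ x := by
    funext x; ring
  rw [this]
  refine (integrable_gaussianPDFReal 0 v₁).bdd_mul (c := (√(2*π*v₂))⁻¹) ?_ ?_
  · exact ((measurable_gaussianPDFReal 0 v₂).comp (measurable_const.sub measurable_id)).aestronglyMeasurable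
  · refine Filter.Eventually.of_forall fun x => ?_
    rw [Real.norm_eq_abs, abs_of_nonneg (gaussianPDFReal_nonneg 0 v₂ _)]
    exact gaussianPDFReal_le v₂ h₂ _

lemma lintegral_gaussianPDF_conv (v₁ v₂ : ℝ≥0) (h₁ : v₁ ≠ 0) (h₂ : v₂ ≠ 0) (z : ℝ) :
    ∫⁻ x, gaussianPDF 0 v₁ x * gaussianPDF 0 v₂ (z - x) = gaussianPDF 0 (v₁ + v₂) z := by
  have ha : (0:ℝ) < v₁ := by positivity
  have hb : (0:ℝ) < v₂ := by positivity
  simp only [gaussianPDF]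
  have hmul : ∀ x, ENNReal.ofReal (gaussianPDFReal 0 v₁ x) * ENNReal.ofReal (gaussianPDFReal 0 v₂ (z - x))
      = ENNReal.ofReal (gaussianPDFReal 0 v₁ x * gaussianPDFReal 0 v₂ (z - x)) :=
    fun x => (ENNReal.ofReal_mul (gaussianPDFReal_nonneg 0 v₁ x)).symm
  simp only [hmul]
  rw [← MeasureTheory.ofReal_integral_eq_lintegral_ofReal
      (integrable_mul_gaussianPDFReal v₁ v₂ h₂ z)
      (Filter.Eventually.of_forall fun x =>
        mul_nonneg (gaussianPDFReal_nonneg 0 v₁ x) (gaussianPDFReal_nonneg 0 v₂ _))]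
  congr 1
  have hre : ∀ (v : ℝ≥0) (x : ℝ), gaussianPDFReal 0 v x = (√(2*π*(v:ℝ)))⁻¹ * rexp (-x^2/(2*(v:ℝ))) := by
    intro v x
    simp [gaussianPDFReal]
  simp only [hre]
  push_cast
  exact pdf_conv v₁ v₂ ha hb z

lemma dirac_zero_conv_real (μ : Measure ℝ) [SFinite μ] : Measure.conv (Measure.dirac (0:ℝ)) μ = μ := by
  unfold Measure.conv
  rw [MeasureTheory.Measure.dirac_prod, Measure.map_map (by fun_prop) (by fun_prop)]
  simp [Function.comp_def]

lemma conv_dirac_zero_real (μ : Measure ℝ) [SFinite μ] : Measure.conv μ (Measure.dirac (0:ℝ)) = μ := by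
  unfold Measure.conv
  rw [MeasureTheory.Measure.prod_dirac, Measure.map_map (by fun_prop) (by fun_prop)]
  simp [Function.comp_def]

lemma gauss_conv (v₁ v₂ : ℝ≥0) :
    Measure.conv (gaussianReal 0 v₁) (gaussianReal 0 v₂) = gaussianReal 0 (v₁ + v₂) := by
  by_cases h₁ : v₁ = 0
  · subst h₁
    rw [gaussianReal_zero_var, dirac_zero_conv_real, zero_add]
  by_cases h₂ : v₂ = 0
  · subst h₂
    rw [gaussianReal_zero_var, conv_dirac_zero_real, add_zero]
  have h12 : v₁ + v₂ ≠ 0 := by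
    intro h
    exact h₁ (by simpa using (add_eq_zero.mp h).1)
  refine Measure.ext_of_Iic _ _ fun t => ?_
  have hS : MeasurableSet {p : ℝ × ℝ | p.1 + p.2 ≤ t} :=
    measurableSet_le (by fun_prop) measurable_const
  have hmap : (Measure.conv (gaussianReal 0 v₁) (gaussianReal 0 v₂)) (Set.Iic t)
      = ((gaussianReal 0 v₁).prod (gaussianReal 0 v₂)) {p : ℝ × ℝ | p.1 + p.2 ≤ t} := by
    rw [Measure.conv, Measure.map_apply (by fun_prop) measurableSet_Iic]
    rfl
  rw [hmap, Measure.prod_apply hS]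
  have hsec : ∀ x : ℝ, (Prod.mk x ⁻¹' {p : ℝ × ℝ | p.1 + p.2 ≤ t}) = Set.Iic (t - x) := by
    intro x; ext y
    simp only [Set.mem_preimage, Set.mem_setOf_eq, Set.mem_Iic]
    constructor <;> intro h <;> linarith
  simp_rw [hsec]
  have hg : Measurable fun x : ℝ => (gaussianReal 0 v₂) (Set.Iic (t - x)) := by
    have : Antitone fun x : ℝ => (gaussianReal 0 v₂) (Set.Iic (t - x)) := by
      intro x y hxy
      exact measure_mono (Set.Iic_subset_Iic.mpr (by linarith))
    exact this.measurable
  nth_rewrite 1 [gaussianReal_of_var_ne_zero 0 h₁]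
  rw [lintegral_withDensity_eq_lintegral_mul _ (measurable_gaussianPDF 0 v₁) hg]
  -- rewrite ν (Iic (t-x)) as an indicator integral and shift
  have hν : ∀ x : ℝ, (gaussianReal 0 v₂) (Set.Iic (t - x))
      = ∫⁻ z, (Set.Iic t).indicator (fun z => gaussianPDF 0 v₂ (z - x)) z := by
    intro x
    rw [gaussianReal_of_var_ne_zero 0 h₂, withDensity_apply _ measurableSet_Iic,
      ← lintegral_indicator measurableSet_Iic]
    rw [← lintegral_add_right_eq_self
      (fun z => (Set.Iic t).indicator (fun z => gaussianPDF 0 v₂ (z - x)) z) x]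
    congr 1
    funext y
    simp only [Set.indicator_apply, Set.mem_Iic, add_sub_cancel_right]
    by_cases hyx : y + x ≤ t
    · rw [if_pos (by linarith), if_pos hyx]
    · rw [if_neg (by intro h; exact hyx (by linarith)), if_neg hyx]
  simp only [Pi.mul_apply, hν]
  have hmeas2 : ∀ x : ℝ, Measurable fun z : ℝ => (Set.Iic t).indicator (fun z => gaussianPDF 0 v₂ (z - x)) z :=
    fun x => ((measurable_gaussianPDF 0 v₂).comp (measurable_id.sub_const x)).indicator measurableSet_Iic
  have hpull : ∀ x : ℝ, gaussianPDF 0 v₁ x * ∫⁻ z, (Set.Iic t).indicator (fun z => gaussianPDF 0 v₂ (z - x)) z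
      = ∫⁻ z, gaussianPDF 0 v₁ x * (Set.Iic t).indicator (fun z => gaussianPDF 0 v₂ (z - x)) z :=
    fun x => (lintegral_const_mul _ (hmeas2 x)).symm
  simp only [hpull]
  rw [lintegral_lintegral_swap]
  swap
  · have : (Function.uncurry fun x z =>
        gaussianPDF 0 v₁ x * (Set.Iic t).indicator (fun z => gaussianPDF 0 v₂ (z - x)) z)
        = fun p : ℝ × ℝ => gaussianPDF 0 v₁ p.1 *
            (if p.2 ≤ t then gaussianPDF 0 v₂ (p.2 - p.1) else 0) := by
      funext p
      simp [Function.uncurry, Set.indicator_apply]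
    rw [this]
    refine (((measurable_gaussianPDF 0 v₁).comp measurable_fst).mul ?_).aemeasurable
    refine Measurable.ite ?_ ((measurable_gaussianPDF 0 v₂).comp (measurable_snd.sub measurable_fst)) measurable_const
    exact measurableSet_le measurable_snd measurable_const
  have hz : ∀ z : ℝ, ∫⁻ x, gaussianPDF 0 v₁ x * (Set.Iic t).indicator (fun z => gaussianPDF 0 v₂ (z - x)) z
      = (Set.Iic t).indicator (fun z => gaussianPDF 0 (v₁ + v₂) z) z := by
    intro z
    by_cases hzt : z ≤ t
    · simp only [Set.indicator_apply, Set.mem_Iic, hzt, if_true]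
      exact lintegral_gaussianPDF_conv v₁ v₂ h₁ h₂ z
    · simp only [Set.indicator_apply, Set.mem_Iic, hzt, if_false, mul_zero, lintegral_zero]
  simp only [hz]
  rw [lintegral_indicator measurableSet_Iic, ← withDensity_apply _ measurableSet_Iic,
    ← gaussianReal_of_var_ne_zero 0 h12]

lemma indepFun_map_add_conv {Ω : Type*} [MeasureSpace Ω] [IsProbabilityMeasure (ℙ : Measure Ω)]
    {X Y : Ω → ℝ} (h : IndepFun X Y ℙ) (hX : Measurable X) (hY : Measurable Y) :
    Measure.map (fun ω => X ω + Y ω) ℙ = Measure.conv (Measure.map X ℙ) (Measure.map Y ℙ) := by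
  rw [Measure.conv, ← (indepFun_iff_map_prod_eq_prod_map_map hX.aemeasurable hY.aemeasurable).mp h,
    Measure.map_map (by fun_prop) (hX.prodMk hY)]
  rfl

lemma map_sum_mul_gauss {Ω : Type*} [MeasureSpace Ω] [IsProbabilityMeasure (ℙ : Measure Ω)]
    {p : ℕ} (ξ : Ω → EuclideanSpace ℝ (Fin p)) (hmeas : Measurable ξ)
    (hindep : iIndepFun (fun i ω => ξ ω i) ℙ)
    (hgauss : ∀ i, Measure.map (fun ω => ξ ω i) ℙ = gaussianReal 0 1)
    (x : Fin p → ℝ) (s : Finset (Fin p)) :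
    Measure.map (fun ω => ∑ i ∈ s, x i * ξ ω i) ℙ
      = gaussianReal 0 (∑ i ∈ s, NNReal.mk (x i ^ 2) (sq_nonneg _)) := by
  classical
  have hcoord : ∀ i, Measurable fun ω => ξ ω i := fun i => (measurable_pi_apply i).comp ((WithLp.measurable_ofLp 2 _).comp hmeas)
  have hgmeas : ∀ j, Measurable fun ω => x j * ξ ω j := fun j => (hcoord j).const_mul _
  have hindep' : iIndepFun (fun j ω => x j * ξ ω j) ℙ :=
    hindep.comp (fun j t => x j * t) (fun j => measurable_const_mul _)
  have hsingle : ∀ i, Measure.map (fun ω => x i * ξ ω i) ℙ = gaussianReal 0 (NNReal.mk (x i ^ 2) (sq_nonneg _)) := by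
    intro i
    have h1 : (fun ω => x i * ξ ω i) = (fun t => x i * t) ∘ (fun ω => ξ ω i) := rfl
    rw [h1, ← Measure.map_map (measurable_const_mul (x i)) (hcoord i), hgauss i]
    have := gaussianReal_map_const_mul (μ := 0) (v := 1) (x i)
    simp only [mul_zero, mul_one] at this
    convert this using 2
  induction s using Finset.induction_on with
  | empty =>
      simp only [Finset.sum_empty]
      rw [gaussianReal_zero_var]
      simp [Measure.map_const]
  | insert _ _ hi ih =>
      rename_i i s
      have hsum : (∑ j ∈ s, fun ω => x j * ξ ω j) = fun ω => ∑ j ∈ s, x j * ξ ω j := by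
        funext ω; simp [Finset.sum_apply]
      have hIF : IndepFun (fun ω => x i * ξ ω i) (fun ω => ∑ j ∈ s, x j * ξ ω j) ℙ := by
        have := (hindep'.indepFun_finsetSum_of_notMem hgmeas hi).symm
        rwa [hsum] at this
      have hfun : (fun ω => ∑ j ∈ insert i s, x j * ξ ω j)
          = fun ω => x i * ξ ω i + ∑ j ∈ s, x j * ξ ω j := by
        funext ω; rw [Finset.sum_insert hi]
      rw [hfun, Finset.sum_insert hi,
        indepFun_map_add_conv hIF (hgmeas i) (by fun_prop),
        hsingle i, ih, gauss_conv]

lemma gaussianReal_neg_map :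
    Measure.map (fun t : ℝ => -t) (gaussianReal 0 1) = gaussianReal 0 1 := by
  have h := gaussianReal_map_const_mul (μ := 0) (v := 1) (-1)
  have h2 : (NNReal.mk ((-1:ℝ)^2) (sq_nonneg _) * 1) = (1 : ℝ≥0) := by
    ext; norm_num
  rw [h2, mul_zero] at h
  have h3 : ((-1 : ℝ) * ·) = (fun t : ℝ => -t) := by funext t; ring
  rwa [h3] at h

lemma gaussianReal_Ici_eq (a : ℝ) :
    gaussianReal 0 1 (Set.Ici a) = gaussianReal 0 1 (Set.Iic (-a)) := by
  nth_rewrite 1 [← gaussianReal_neg_map]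
  rw [Measure.map_apply measurable_neg measurableSet_Ici]
  congr 1
  ext t
  simp only [Set.mem_preimage, Set.mem_Ici, Set.mem_Iic]
  constructor <;> intro <;> linarith

lemma gaussianReal_scaling (v : ℝ≥0) (hv : v ≠ 0) :
    gaussianReal 0 v = Measure.map (fun t : ℝ => Real.sqrt v * t) (gaussianReal 0 1) := by
  have hvpos : (0:ℝ) < v := by positivity
  have h := gaussianReal_map_const_mul (μ := 0) (v := 1) (Real.sqrt v)
  have h2 : (NNReal.mk ((Real.sqrt v)^2) (sq_nonneg _) * 1) = v := by
    ext
    simp [Real.sq_sqrt hvpos.le]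
  rw [h2, mul_zero] at h
  exact h.symm

lemma gaussianReal_Iic_scale (v : ℝ≥0) (hv : v ≠ 0) (a : ℝ) :
    gaussianReal 0 v (Set.Iic a) = gaussianReal 0 1 (Set.Iic (a / Real.sqrt v)) := by
  have hvpos : (0:ℝ) < Real.sqrt v := Real.sqrt_pos.mpr (by positivity)
  rw [gaussianReal_scaling v hv, Measure.map_apply (measurable_const_mul _) measurableSet_Iic]
  congr 1
  ext t
  simp only [Set.mem_preimage, Set.mem_Iic]
  rw [← le_div_iff₀' hvpos]

lemma gaussianReal_Ici_scale (v : ℝ≥0) (hv : v ≠ 0) (a : ℝ) :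
    gaussianReal 0 v (Set.Ici a) = gaussianReal 0 1 (Set.Iic (-(a / Real.sqrt v))) := by
  have hvpos : (0:ℝ) < Real.sqrt v := Real.sqrt_pos.mpr (by positivity)
  rw [gaussianReal_scaling v hv, Measure.map_apply (measurable_const_mul _) measurableSet_Ici]
  have : (fun t : ℝ => Real.sqrt v * t) ⁻¹' (Set.Ici a) = Set.Ici (a / Real.sqrt v) := by
    ext t
    simp only [Set.mem_preimage, Set.mem_Ici]
    rw [← div_le_iff₀' hvpos]
  rw [this, gaussianReal_Ici_eq]

lemma gaussianReal_Iio_eq_Iic (v : ℝ≥0) (hv : v ≠ 0) (a : ℝ) :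
    gaussianReal 0 v (Set.Iio a) = gaussianReal 0 v (Set.Iic a) := by
  have hsing : gaussianReal 0 v {a} = 0 :=
    gaussianReal_absolutelyContinuous 0 hv (by simp)
  refine le_antisymm (measure_mono Set.Iio_subset_Iic_self) ?_
  have hu : Set.Iic a = Set.Iio a ∪ {a} := Set.Iio_union_right.symm
  rw [hu]
  exact (measure_union_le _ _).trans (by rw [hsing, add_zero])

lemma stdNormalCDF_ofReal (t : ℝ) :
    gaussianReal 0 1 (Set.Iic t) = ENNReal.ofReal (stdNormalCDF t) := by
  rw [stdNormalCDF, ENNReal.ofReal_toReal (measure_ne_top _ _)]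

lemma sgn_eq_one_iff (t : ℝ) : sgn t = 1 ↔ 0 ≤ t := by
  unfold sgn
  by_cases h : 0 ≤ t
  · simp [h]
  · simp only [h, if_false]
    constructor
    · intro habs; norm_num at habs
    · intro habs; exact habs.elim

lemma sgn_eq_neg_one_iff (t : ℝ) : sgn t = -1 ↔ t < 0 := by
  unfold sgn
  by_cases h : 0 ≤ t
  · simp only [h, if_true]
    constructor
    · intro habs; norm_num at habs
    · intro habs; linarith
  · simp [h, lt_of_not_ge h]

lemma marginal_prob {Ω : Type*} [MeasureSpace Ω] [IsProbabilityMeasure (ℙ : Measure Ω)]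
    {p : ℕ} (ξ : Ω → EuclideanSpace ℝ (Fin p)) (hmeas : Measurable ξ)
    (hindep : iIndepFun (fun i ω => ξ ω i) ℙ)
    (hgauss : ∀ i, Measure.map (fun ω => ξ ω i) ℙ = gaussianReal 0 1)
    (θ : EuclideanSpace ℝ (Fin p)) (σ : ℝ) (hσ : 0 < σ)
    (x : EuclideanSpace ℝ (Fin p)) (hx : x ≠ 0) (y : ℝ) (hy : y = 1 ∨ y = -1) :
    ℙ {ω | sgn (inner ℝ (θ + σ • ξ ω) x : ℝ) = y}
      = ENNReal.ofReal (stdNormalCDF (angularMargin θ x y / σ)) := by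
  classical
  set c : ℝ := (inner ℝ θ x : ℝ) with hc
  set S : Ω → ℝ := fun ω => ∑ i, x i * ξ ω i with hSdef
  have hcoord : ∀ i, Measurable fun ω => ξ ω i := fun i => (measurable_pi_apply i).comp ((WithLp.measurable_ofLp 2 _).comp hmeas)
  have hS : Measurable S := by
    apply Finset.measurable_sum
    intro i _
    exact (hcoord i).const_mul _
  set v : ℝ≥0 := ∑ i, NNReal.mk (x i ^ 2) (sq_nonneg _) with hvdef
  have hlaw : Measure.map S ℙ = gaussianReal 0 v :=
    map_sum_mul_gauss ξ hmeas hindep hgauss (fun i => x i) Finset.univ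
  have hvcoe : (v : ℝ) = ∑ i, x i ^ 2 := by
    rw [hvdef, NNReal.coe_sum]
    rfl
  have hnorm : ‖x‖ = Real.sqrt v := by
    rw [EuclideanSpace.norm_eq, hvcoe]
    congr 1
    exact Finset.sum_congr rfl fun i _ => by rw [Real.norm_eq_abs, sq_abs]
  have hnpos : (0:ℝ) < ‖x‖ := norm_pos_iff.mpr hx
  have hv : v ≠ 0 := by
    intro h
    apply hx
    have h0 : ‖x‖ = 0 := by rw [hnorm, h]; simp
    exact norm_eq_zero.mp h0
  have hn : Real.sqrt v ≠ 0 := by rw [← hnorm]; exact ne_of_gt hnpos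
  have hinner : ∀ ω, (inner ℝ (θ + σ • ξ ω) x : ℝ) = c + σ * S ω := by
    intro ω
    rw [inner_add_left, real_inner_smul_left]
    congr 1
  rcases hy with hy | hy <;> subst hy
  · have hev : {ω | sgn (inner ℝ (θ + σ • ξ ω) x : ℝ) = 1} = S ⁻¹' (Set.Ici (-c / σ)) := by
      ext ω
      simp only [Set.mem_setOf_eq, Set.mem_preimage, Set.mem_Ici, hinner ω, sgn_eq_one_iff]
      rw [div_le_iff₀ hσ, mul_comm]
      constructor <;> intro <;> linarith
    have hσ' : σ ≠ 0 := ne_of_gt hσ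
    have hn' : ‖x‖ ≠ 0 := ne_of_gt hnpos
    have harg : -(-c / σ / Real.sqrt v) = angularMargin θ x 1 / σ := by
      rw [angularMargin, ← hc, ← hnorm]
      ring
    rw [hev, ← Measure.map_apply hS measurableSet_Ici, hlaw, gaussianReal_Ici_scale v hv,
      stdNormalCDF_ofReal, harg]
  · have hev : {ω | sgn (inner ℝ (θ + σ • ξ ω) x : ℝ) = -1} = S ⁻¹' (Set.Iio (-c / σ)) := by
      ext ω
      simp only [Set.mem_setOf_eq, Set.mem_preimage, Set.mem_Iio, hinner ω, sgn_eq_neg_one_iff]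
      rw [lt_div_iff₀ hσ, mul_comm]
      constructor <;> intro <;> linarith
    have hσ' : σ ≠ 0 := ne_of_gt hσ
    have hn' : ‖x‖ ≠ 0 := ne_of_gt hnpos
    have harg : -c / σ / Real.sqrt v = angularMargin θ x (-1) / σ := by
      rw [angularMargin, ← hc, ← hnorm]
      ring
    rw [hev, ← Measure.map_apply hS measurableSet_Iio, hlaw, gaussianReal_Iio_eq_Iic v hv,
      gaussianReal_Iic_scale v hv, stdNormalCDF_ofReal, harg]

lemma stdNormalCDF_nonneg (t : ℝ) : 0 ≤ stdNormalCDF t := ENNReal.toReal_nonneg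

lemma stdNormalCDF_le_one (t : ℝ) : stdNormalCDF t ≤ 1 := by
  rw [stdNormalCDF]
  exact ENNReal.toReal_le_of_le_ofReal one_pos.le (by simpa using prob_le_one)

lemma stdNormalCDF_mono : Monotone stdNormalCDF := fun s t h =>
  ENNReal.toReal_mono (measure_ne_top _ _) (measure_mono (Set.Iic_subset_Iic.mpr h))

lemma stdNormalCDF_neg (t : ℝ) : stdNormalCDF (-t) = 1 - stdNormalCDF t := by
  rw [stdNormalCDF, stdNormalCDF, ← gaussianReal_Ici_eq, ← Set.compl_Iio,
    measure_compl measurableSet_Iio (measure_ne_top _ _),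
    gaussianReal_Iio_eq_Iic 1 one_ne_zero]
  rw [measure_univ, ENNReal.toReal_sub_of_le prob_le_one ENNReal.one_ne_top, ENNReal.toReal_one]

lemma integrable_of_bounded_meas {α : Type*} [MeasurableSpace α] {M : Measure α}
    [IsProbabilityMeasure M] {f : α → ℝ} (hm : Measurable f) (h0 : ∀ x, 0 ≤ f x)
    (h1 : ∀ x, f x ≤ 1) : Integrable f M :=
  ⟨hm.aestronglyMeasurable, HasFiniteIntegral.of_bounded (C := 1)
    (Filter.Eventually.of_forall fun x => by
      rw [Real.norm_eq_abs, abs_of_nonneg (h0 x)]; exact h1 x)⟩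


/-- Variance bound for the accuracy of the perturbed model: the variance over the noise `ξ`
of the accuracy is at most
`E_{Z₁,Z₂∼𝒟⊗𝒟}[Φ(min(α₁,α₂)/σ)·Φ(−max(α₁,α₂)/σ)]`. -/
theorem variance_accuracy_bound
    (p : ℕ) {Ω : Type*} [MeasureSpace Ω] [IsProbabilityMeasure (ℙ : Measure Ω)]
    (ξ : Ω → EuclideanSpace ℝ (Fin p))
    (hmeas : Measurable ξ)
    (hindep : iIndepFun (fun i ω => ξ ω i) ℙ)
    (hgauss : ∀ i, Measure.map (fun ω => ξ ω i) ℙ = gaussianReal 0 1)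
    (D : Measure (EuclideanSpace ℝ (Fin p) × ℝ)) [IsProbabilityMeasure D]
    (hsupp : ∀ᵐ z ∂D, z.1 ≠ 0 ∧ (z.2 = 1 ∨ z.2 = -1))
    (θ : EuclideanSpace ℝ (Fin p)) (σ : ℝ) (hσ : 0 < σ) :
    variance
        (fun ω => (D {z | sgn (inner ℝ (θ + σ • ξ ω) z.1 : ℝ) = z.2}).toReal) ℙ
      ≤ ∫ w, stdNormalCDF
            (min (angularMargin θ w.1.1 w.1.2) (angularMargin θ w.2.1 w.2.2) / σ)
          * stdNormalCDF
            (-(max (angularMargin θ w.1.1 w.1.2) (angularMargin θ w.2.1 w.2.2)) / σ)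
          ∂(D.prod D) := by
  classical
  -- the "correct prediction" set
  set C : Set (Ω × (EuclideanSpace ℝ (Fin p) × ℝ)) := {q | sgn (inner ℝ (θ + σ • ξ q.1) q.2.1 : ℝ) = q.2.2} with hCdef
  have hsgnm : Measurable sgn := by
    unfold sgn
    exact Measurable.ite measurableSet_Ici measurable_const measurable_const
  have hinnm : Measurable fun q : Ω × (EuclideanSpace ℝ (Fin p) × ℝ) => (inner ℝ (θ + σ • ξ q.1) q.2.1 : ℝ) := by
    have h1 : Measurable fun q : Ω × (EuclideanSpace ℝ (Fin p) × ℝ) => ((θ + σ • ξ q.1, q.2.1) : EuclideanSpace ℝ (Fin p) × EuclideanSpace ℝ (Fin p)) := by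
      refine Measurable.prodMk ?_ measurable_snd.fst
      fun_prop
    exact (Continuous.measurable (continuous_inner)).comp h1
  have hC : MeasurableSet C :=
    measurableSet_eq_fun (hsgnm.comp hinnm) measurable_snd.snd
  set A : Ω → ℝ := fun ω => (D (Prod.mk ω ⁻¹' C)).toReal with hAdef
  have hAmeas : Measurable A := (measurable_measure_prodMk_left hC).ennreal_toReal
  have hA01 : ∀ ω, 0 ≤ A ω ∧ A ω ≤ 1 := fun ω =>
    ⟨ENNReal.toReal_nonneg, ENNReal.toReal_le_of_le_ofReal one_pos.le (by simpa using prob_le_one)⟩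
  have hMem : MemLp A 2 ℙ :=
    MemLp.of_bound hAmeas.aestronglyMeasurable 1 (Filter.Eventually.of_forall fun ω => by
      rw [Real.norm_eq_abs, abs_of_nonneg (hA01 ω).1]; exact (hA01 ω).2)
  -- functions
  set α : EuclideanSpace ℝ (Fin p) × ℝ → ℝ := fun z => angularMargin θ z.1 z.2 with hαdef
  have hαmeas : Measurable α := by
    refine Measurable.div ?_ measurable_fst.norm
    exact measurable_snd.mul
      ((Continuous.measurable (Continuous.inner continuous_const continuous_id)).comp measurable_fst)
  set φ : EuclideanSpace ℝ (Fin p) × ℝ → ℝ := fun z => stdNormalCDF (α z / σ) with hφdef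
  have hφmeas : Measurable φ := stdNormalCDF_mono.measurable.comp (hαmeas.div_const σ)
  have hφint : Integrable φ D := integrable_of_bounded_meas hφmeas
    (fun z => stdNormalCDF_nonneg _) (fun z => stdNormalCDF_le_one _)
  -- marginal: for a.e. z, the section probability equals ofReal (φ z)
  have hmarg : ∀ z : EuclideanSpace ℝ (Fin p) × ℝ, z.1 ≠ 0 → (z.2 = 1 ∨ z.2 = -1) →
      ℙ ((fun ω => (ω, z)) ⁻¹' C) = ENNReal.ofReal (φ z) := by
    intro z hz1 hz2
    have : ((fun ω => (ω, z)) ⁻¹' C) = {ω | sgn (inner ℝ (θ + σ • ξ ω) z.1 : ℝ) = z.2} := rfl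
    rw [this]
    exact marginal_prob ξ hmeas hindep hgauss θ σ hσ z.1 hz1 z.2 hz2
  -- expectation of A
  have hEA : ∫ ω, A ω ∂ℙ = ∫ z, φ z ∂D := by
    rw [hAdef]
    rw [integral_toReal (measurable_measure_prodMk_left hC).aemeasurable
      (Filter.Eventually.of_forall fun ω => measure_lt_top _ _)]
    rw [← Measure.prod_apply hC, Measure.prod_apply_symm hC]
    rw [lintegral_congr_ae (g := fun z => ENNReal.ofReal (φ z))
      (by filter_upwards [hsupp] with z hz using hmarg z hz.1 hz.2)]
    rw [← ofReal_integral_eq_lintegral_ofReal hφint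
      (Filter.Eventually.of_forall fun z => stdNormalCDF_nonneg _)]
    exact ENNReal.toReal_ofReal (integral_nonneg fun z => stdNormalCDF_nonneg _)
  -- second moment
  set C₂ : Set (Ω × ((EuclideanSpace ℝ (Fin p) × ℝ) × (EuclideanSpace ℝ (Fin p) × ℝ))) := {q | (q.1, q.2.1) ∈ C ∧ (q.1, q.2.2) ∈ C} with hC₂def
  have hC₂ : MeasurableSet C₂ := by
    refine MeasurableSet.inter ?_ ?_
    · exact hC.preimage (measurable_fst.prodMk measurable_snd.fst)
    · exact hC.preimage (measurable_fst.prodMk measurable_snd.snd)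
  have hsq : ∀ ω, A ω ^ 2 = ((D.prod D) (Prod.mk ω ⁻¹' C₂)).toReal := by
    intro ω
    have hpre : Prod.mk ω ⁻¹' C₂ = (Prod.mk ω ⁻¹' C) ×ˢ (Prod.mk ω ⁻¹' C) := by
      ext w
      simp only [Set.mem_preimage, Set.mem_prod, hC₂def, Set.mem_setOf_eq]
    rw [hpre, Measure.prod_prod, ENNReal.toReal_mul, hAdef, sq]
  set ψ : (EuclideanSpace ℝ (Fin p) × ℝ) × (EuclideanSpace ℝ (Fin p) × ℝ) → ℝ := fun w => stdNormalCDF (min (α w.1) (α w.2) / σ) with hψdef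
  have hψmeas : Measurable ψ := stdNormalCDF_mono.measurable.comp
    (((hαmeas.comp measurable_fst).min (hαmeas.comp measurable_snd)).div_const σ)
  have hψint : Integrable ψ (D.prod D) := integrable_of_bounded_meas hψmeas
    (fun w => stdNormalCDF_nonneg _) (fun w => stdNormalCDF_le_one _)
  have hsupp2 : ∀ᵐ w ∂(D.prod D),
      (w.1.1 ≠ 0 ∧ (w.1.2 = 1 ∨ w.1.2 = -1)) ∧ (w.2.1 ≠ 0 ∧ (w.2.2 = 1 ∨ w.2.2 = -1)) := by
    have h1 : ∀ᵐ w ∂(D.prod D),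
        (fun z : EuclideanSpace ℝ (Fin p) × ℝ => z.1 ≠ 0 ∧ (z.2 = 1 ∨ z.2 = -1)) w.1 := by
      have hmap : ∀ᵐ y ∂(Measure.map (Prod.fst :
          (EuclideanSpace ℝ (Fin p) × ℝ) × (EuclideanSpace ℝ (Fin p) × ℝ) →
          EuclideanSpace ℝ (Fin p) × ℝ) (D.prod D)), y.1 ≠ 0 ∧ (y.2 = 1 ∨ y.2 = -1) := by
        rw [Measure.map_fst_prod]
        simpa using hsupp
      exact ae_of_ae_map (f := (Prod.fst :
          (EuclideanSpace ℝ (Fin p) × ℝ) × (EuclideanSpace ℝ (Fin p) × ℝ) →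
          EuclideanSpace ℝ (Fin p) × ℝ)) measurable_fst.aemeasurable hmap
    have h2 : ∀ᵐ w ∂(D.prod D),
        (fun z : EuclideanSpace ℝ (Fin p) × ℝ => z.1 ≠ 0 ∧ (z.2 = 1 ∨ z.2 = -1)) w.2 := by
      have hmap : ∀ᵐ y ∂(Measure.map (Prod.snd :
          (EuclideanSpace ℝ (Fin p) × ℝ) × (EuclideanSpace ℝ (Fin p) × ℝ) →
          EuclideanSpace ℝ (Fin p) × ℝ) (D.prod D)), y.1 ≠ 0 ∧ (y.2 = 1 ∨ y.2 = -1) := by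
        rw [Measure.map_snd_prod]
        simpa using hsupp
      exact ae_of_ae_map (f := (Prod.snd :
          (EuclideanSpace ℝ (Fin p) × ℝ) × (EuclideanSpace ℝ (Fin p) × ℝ) →
          EuclideanSpace ℝ (Fin p) × ℝ)) measurable_snd.aemeasurable hmap
    filter_upwards [h1, h2] with w hw1 hw2
    exact ⟨hw1, hw2⟩
  have hkey : ∀ᵐ w ∂(D.prod D),
      ℙ ((fun ω => (ω, w)) ⁻¹' C₂) ≤ ENNReal.ofReal (ψ w) := by
    filter_upwards [hsupp2] with w hw
    have hsect : ((fun ω => (ω, w)) ⁻¹' C₂)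
        = ((fun ω => (ω, w.1)) ⁻¹' C) ∩ ((fun ω => (ω, w.2)) ⁻¹' C) := rfl
    rcases le_total (α w.1) (α w.2) with hab | hab
    · calc ℙ ((fun ω => (ω, w)) ⁻¹' C₂) ≤ ℙ ((fun ω => (ω, w.1)) ⁻¹' C) := by
            rw [hsect]; exact measure_mono Set.inter_subset_left
      _ = ENNReal.ofReal (φ w.1) := hmarg w.1 hw.1.1 hw.1.2
      _ = ENNReal.ofReal (ψ w) := by simp only [hψdef, hφdef]; rw [min_eq_left hab]
    · calc ℙ ((fun ω => (ω, w)) ⁻¹' C₂) ≤ ℙ ((fun ω => (ω, w.2)) ⁻¹' C) := by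
            rw [hsect]; exact measure_mono Set.inter_subset_right
      _ = ENNReal.ofReal (φ w.2) := hmarg w.2 hw.2.1 hw.2.2
      _ = ENNReal.ofReal (ψ w) := by simp only [hψdef, hφdef]; rw [min_eq_right hab]
  have hEA2 : ∫ ω, A ω ^ 2 ∂ℙ ≤ ∫ w, ψ w ∂(D.prod D) := by
    have h1 : ∫ ω, A ω ^ 2 ∂ℙ
        = (((ℙ : Measure Ω).prod (D.prod D)) C₂).toReal := by
      simp_rw [hsq]
      rw [integral_toReal (measurable_measure_prodMk_left hC₂).aemeasurable
        (Filter.Eventually.of_forall fun ω => measure_lt_top _ _), ← Measure.prod_apply hC₂]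
    rw [h1, Measure.prod_apply_symm hC₂]
    calc (∫⁻ w, ℙ ((fun ω => (ω, w)) ⁻¹' C₂) ∂(D.prod D)).toReal
        ≤ (∫⁻ w, ENNReal.ofReal (ψ w) ∂(D.prod D)).toReal := by
          refine ENNReal.toReal_mono ?_ (lintegral_mono_ae hkey)
          rw [← ofReal_integral_eq_lintegral_ofReal hψint
            (Filter.Eventually.of_forall fun w => stdNormalCDF_nonneg _)]
          exact ENNReal.ofReal_ne_top
      _ = ∫ w, ψ w ∂(D.prod D) := by
          rw [← ofReal_integral_eq_lintegral_ofReal hψint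
            (Filter.Eventually.of_forall fun w => stdNormalCDF_nonneg _)]
          exact ENNReal.toReal_ofReal (integral_nonneg fun w => stdNormalCDF_nonneg _)
  -- product of expectations
  have hprod : (∫ z, φ z ∂D) ^ 2 = ∫ w, φ w.1 * φ w.2 ∂(D.prod D) := by
    rw [integral_prod_mul φ φ, sq]
  have hφφint : Integrable (fun w : (EuclideanSpace ℝ (Fin p) × ℝ) × (EuclideanSpace ℝ (Fin p) × ℝ) => φ w.1 * φ w.2) (D.prod D) :=
    integrable_of_bounded_meas ((hφmeas.comp measurable_fst).mul (hφmeas.comp measurable_snd))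
      (fun w => mul_nonneg (stdNormalCDF_nonneg _) (stdNormalCDF_nonneg _))
      (fun w => mul_le_one₀ (stdNormalCDF_le_one _) (stdNormalCDF_nonneg _) (stdNormalCDF_le_one _))
  -- pointwise identity
  have hpt : ∀ w : (EuclideanSpace ℝ (Fin p) × ℝ) × (EuclideanSpace ℝ (Fin p) × ℝ), ψ w - φ w.1 * φ w.2
      = stdNormalCDF (min (α w.1) (α w.2) / σ)
        * stdNormalCDF (-(max (α w.1) (α w.2)) / σ) := by
    intro w
    have hmm : φ w.1 * φ w.2
        = stdNormalCDF (min (α w.1) (α w.2) / σ) * stdNormalCDF (max (α w.1) (α w.2) / σ) := by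
      rcases le_total (α w.1) (α w.2) with h | h
      · rw [min_eq_left h, max_eq_right h]
      · rw [min_eq_right h, max_eq_left h, mul_comm]
    simp only [hψdef]
    rw [hmm, show -(max (α w.1) (α w.2)) / σ = -(max (α w.1) (α w.2) / σ) by ring,
      stdNormalCDF_neg]
    ring
  -- conclude
  have hgoal : variance A ℙ ≤ ∫ w, ψ w ∂(D.prod D) - (∫ z, φ z ∂D) ^ 2 := by
    rw [variance_eq_sub hMem]
    have e1 : ℙ[A ^ 2] = ∫ ω, A ω ^ 2 ∂ℙ := rfl
    have e2 : ℙ[A] = ∫ ω, A ω ∂ℙ := rfl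
    rw [e1, e2, hEA]
    exact sub_le_sub_right hEA2 _
  have hfinal : ∫ w, ψ w ∂(D.prod D) - (∫ z, φ z ∂D) ^ 2
      = ∫ w, stdNormalCDF (min (α w.1) (α w.2) / σ)
          * stdNormalCDF (-(max (α w.1) (α w.2)) / σ) ∂(D.prod D) := by
    rw [hprod, ← integral_sub hψint hφφint]
    exact integral_congr_ae (Filter.Eventually.of_forall fun w => hpt w)
  have hAeq : (fun ω => (D {z | sgn (inner ℝ (θ + σ • ξ ω) z.1 : ℝ) = z.2}).toReal) = A := rfl
  rw [hAeq]
  exact hgoal.trans (le_of_eq hfinal)
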